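/- Let s ∈ (0,1), N > 2s, m > 0, and suppose (μ,u) ∈ ℝ × H^s(ℝ^N) with u ≠ 0 satisfies the Pohožaev identity ‖(-Δ)^{s/2}u‖₂² + 2_s^*·∫((μ/2)u² - G(u))dx = 0 (with ∫G(u)dx finite), ‖u‖₂² = m, and K(u) := (1/2)‖(-Δ)^{s/2}u‖₂² - ∫G(u)dx ≤ 0. Then μ > 0. -/

import Mathlib

open MeasureTheory

/-- Gagliardo seminorm squared `‖(-Δ)^{s/2}u‖₂²` (up to the constant `C_{N,s}`). -/
noncomputable def gagSq (N : ℕ) (s : ℝ) (u : EuclideanSpace ℝ (Fin N) → ℝ) : ℝ :=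
  ∫ p : EuclideanSpace ℝ (Fin N) × EuclideanSpace ℝ (Fin N),
    (u p.1 - u p.2) ^ 2 / ‖p.1 - p.2‖ ^ ((N : ℝ) + 2 * s)

/-- Proposition 4.2 (iii): if `u ≠ 0` in `H^s(ℝ^N)` satisfies the Pohožaev
identity with frequency `μ`, `‖u‖₂² = m > 0`, and `K(u) ≤ 0`, then `μ > 0`. -/
theorem stmt_19 (N : ℕ) (s μ m : ℝ) (hs : 0 < s) (hs1 : s < 1)
    (hN : 2 * s < (N : ℝ)) (hm : 0 < m) (G : ℝ → ℝ)
    (u : EuclideanSpace ℝ (Fin N) → ℝ)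
    (hu0 : ¬ (∀ᵐ x : EuclideanSpace ℝ (Fin N), u x = 0))
    (hL2 : Integrable (fun x => (u x) ^ 2))
    (hGag : Integrable (fun p : EuclideanSpace ℝ (Fin N) × EuclideanSpace ℝ (Fin N) =>
        (u p.1 - u p.2) ^ 2 / ‖p.1 - p.2‖ ^ ((N : ℝ) + 2 * s)))
    (hGint : Integrable (fun x => G (u x)))
    (hmass : (∫ x, (u x) ^ 2) = m)
    (hPoh : gagSq N s u + (2 * N / ((N : ℝ) - 2 * s)) *
        (∫ x, (μ / 2 * (u x) ^ 2 - G (u x))) = 0)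
    (hK : 1 / 2 * gagSq N s u - (∫ x, G (u x)) ≤ 0) :
    0 < μ := by
  have hs2 : (0 : ℝ) < (N : ℝ) - 2 * s := by linarith
  have hNpos : (0 : ℝ) < (N : ℝ) := by linarith
  haveI : NeZero N := ⟨Nat.pos_iff_ne_zero.mp (by exact_mod_cast hNpos)⟩
  haveI : Nontrivial (EuclideanSpace ℝ (Fin N)) := by
    have h : Nonempty (Fin N) := inferInstance
    refine ⟨EuclideanSpace.single h.some 1, 0, fun hc => ?_⟩
    have := congrArg (fun v => v h.some) hc
    simp [EuclideanSpace.single_apply] at this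
  have htop : (volume : Measure (EuclideanSpace ℝ (Fin N))) Set.univ = ⊤ :=
    measure_univ_of_isAddLeftInvariant volume
  -- positivity of the Gagliardo seminorm
  have hfnn : ∀ p : EuclideanSpace ℝ (Fin N) × EuclideanSpace ℝ (Fin N),
      0 ≤ (u p.1 - u p.2) ^ 2 / ‖p.1 - p.2‖ ^ ((N : ℝ) + 2 * s) :=
    fun p => div_nonneg (sq_nonneg _) (Real.rpow_nonneg (norm_nonneg _) _)
  have hgnn : 0 ≤ gagSq N s u := integral_nonneg hfnn
  have hgpos : 0 < gagSq N s u := by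
    rcases hgnn.lt_or_eq with h | h
    · exact h
    · exfalso
      have hzero : (fun p : EuclideanSpace ℝ (Fin N) × EuclideanSpace ℝ (Fin N) =>
          (u p.1 - u p.2) ^ 2 / ‖p.1 - p.2‖ ^ ((N : ℝ) + 2 * s)) =ᵐ[volume] 0 :=
        (integral_eq_zero_iff_of_nonneg hfnn hGag).mp h.symm
      have hdiag : ∀ᵐ p : EuclideanSpace ℝ (Fin N) × EuclideanSpace ℝ (Fin N),
          p.1 ≠ p.2 := by
        have hmeas : MeasurableSet {p : EuclideanSpace ℝ (Fin N) ×
            EuclideanSpace ℝ (Fin N) | p.1 = p.2} :=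
          measurableSet_eq_fun measurable_fst measurable_snd
        rw [ae_iff]
        simp only [ne_eq, not_not]
        rw [Measure.volume_eq_prod, Measure.prod_apply hmeas]
        simp [measure_singleton]
      have huv : ∀ᵐ p : EuclideanSpace ℝ (Fin N) × EuclideanSpace ℝ (Fin N),
          u p.1 = u p.2 := by
        filter_upwards [hzero, hdiag] with p h1 h2
        have hne : p.1 - p.2 ≠ 0 := sub_ne_zero.mpr h2
        have hpos : (0 : ℝ) < ‖p.1 - p.2‖ ^ ((N : ℝ) + 2 * s) :=
          Real.rpow_pos_of_pos (norm_pos_iff.mpr hne) _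
        have h1' : (u p.1 - u p.2) ^ 2 / ‖p.1 - p.2‖ ^ ((N : ℝ) + 2 * s) = 0 := h1
        have hnum : (u p.1 - u p.2) ^ 2 = 0 := by
          rcases div_eq_zero_iff.mp h1' with h | h
          · exact h
          · exact absurd h hpos.ne'
        have := pow_eq_zero_iff (n := 2) (by norm_num) |>.mp hnum
        linarith [sub_eq_zero.mp this]
      rw [Measure.volume_eq_prod] at huv
      have h2 := Measure.ae_ae_of_ae_prod huv
      haveI : NeZero (volume : Measure (EuclideanSpace ℝ (Fin N))) :=
        ⟨fun hc => by simp [hc] at htop⟩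
      obtain ⟨x₀, hx₀⟩ := h2.exists
      by_cases hc : u x₀ = 0
      · exact hu0 (hx₀.mono fun y hy => by have hy' : u x₀ = u y := hy; rw [← hy', hc])
      · have hconst : Integrable (fun _ : EuclideanSpace ℝ (Fin N) => (u x₀) ^ 2) :=
          hL2.congr (hx₀.mono fun y hy => by have hy' : u x₀ = u y := hy; simp [← hy'])
        rcases integrable_const_iff.mp hconst with h | h
        · exact hc (pow_eq_zero_iff (n := 2) (by norm_num) |>.mp h)
        · haveI := h; exact absurd htop (measure_ne_top _ _)
  -- algebra
  have hint : (∫ x, (μ / 2 * (u x) ^ 2 - G (u x))) = μ / 2 * m - ∫ x, G (u x) := by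
    rw [integral_sub (hL2.const_mul (μ / 2)) hGint, integral_const_mul, hmass]
  rw [hint] at hPoh
  set g := gagSq N s u
  set I := ∫ x, G (u x)
  have hc2 : 2 < 2 * N / ((N : ℝ) - 2 * s) := by
    rw [lt_div_iff₀ hs2]; linarith
  by_contra hμ
  push_neg at hμ
  have hle : 2 * N / ((N : ℝ) - 2 * s) * (μ / 2 * m) ≤ 0 :=
    mul_nonpos_of_nonneg_of_nonpos (by linarith) (by nlinarith)
  nlinarith [mul_lt_mul_of_pos_right hc2 hgpos,
    mul_le_mul_of_nonneg_left hK (by linarith : (0:ℝ) ≤ 2 * N / ((N : ℝ) - 2 * s))]
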